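/- Let K be a category with a left accurate functorial factorization (E₀, l, r). Let (g, t) and (g, t') be R-algebras with the same underlying morphism g, and suppose there exists s : E₀(g) → E₀(Lg) making (Lg, s) an L-coalgebra. If for every L-coalgebra (f, σ) and every morphism (u, v) : f → g in Arrow(K) one has t ∘ E(u,v) ∘ σ = t' ∘ E(u,v) ∘ σ, then t = t'. -/

import Mathlib

open CategoryTheory CategoryTheory.Limits

universe v u

/-- A functorial factorization on `K`: a functor `E : Arrow K ⥤ K` together with
natural transformations `l` (from the domain functor) and `r` (to the codomain
functor) such that `Lf ≫ Rf = f` for every arrow `f`. -/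
structure FunctorialFactorization (K : Type u) [Category.{v} K] where
  E : Arrow K ⥤ K
  l : (Arrow.leftFunc : Arrow K ⥤ K) ⟶ E
  r : E ⟶ (Arrow.rightFunc : Arrow K ⥤ K)
  fac : ∀ f : Arrow K, l.app f ≫ r.app f = f.hom

namespace FunctorialFactorization

variable {K : Type u} [Category.{v} K]

/-- The morphism `(id, Rf) : Lf ⟶ f` in the arrow category. -/
def sqL (F : FunctorialFactorization K) (f : Arrow K) :
    Arrow.mk (F.l.app f) ⟶ f :=
  Arrow.homMk (u := 𝟙 f.left) (v := F.r.app f) ((Category.id_comp f.hom).trans (F.fac f).symm)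

/-- The morphism `(Lf, id) : f ⟶ Rf` in the arrow category. -/
def sqR (F : FunctorialFactorization K) (f : Arrow K) :
    f ⟶ Arrow.mk (F.r.app f) :=
  Arrow.homMk (u := F.l.app f) (v := 𝟙 f.right) ((F.fac f).trans (Category.comp_id f.hom).symm)

/-- Left accuracy: `E(id, Rf) = R(Lf)` for every arrow `f`. -/
def LeftAccurate (F : FunctorialFactorization K) : Prop :=
  ∀ f : Arrow K, F.E.map (F.sqL f) = F.r.app (Arrow.mk (F.l.app f))

/-- Right accuracy: `E(Lf, id) = L(Rf)` for every arrow `f`. -/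
def RightAccurate (F : FunctorialFactorization K) : Prop :=
  ∀ f : Arrow K, F.E.map (F.sqR f) = F.l.app (Arrow.mk (F.r.app f))

/-- `(f, s)` is an `L`-coalgebra: `s ∘ f = Lf` and `Rf ∘ s = id`. -/
def IsCoalgebra (F : FunctorialFactorization K) (f : Arrow K)
    (s : f.right ⟶ F.E.obj f) : Prop :=
  f.hom ≫ s = F.l.app f ∧ s ≫ F.r.app f = 𝟙 f.right

/-- `(g, t)` is an `R`-algebra: `g ∘ t = Rg` and `t ∘ Lg = id`. -/
def IsAlgebra (F : FunctorialFactorization K) (g : Arrow K)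
    (t : F.E.obj g ⟶ g.left) : Prop :=
  t ≫ g.hom = F.r.app g ∧ F.l.app g ≫ t = 𝟙 g.left

end FunctorialFactorization

namespace FunctorialFactorization

variable {K : Type u} [Category.{v} K]

theorem LeftAccurate.comp_map_sqL_eq_id {F : FunctorialFactorization K} (hF : F.LeftAccurate)
    {g : Arrow K} {s : F.E.obj g ⟶ F.E.obj (Arrow.mk (F.l.app g))}
    (hs : s ≫ F.r.app (Arrow.mk (F.l.app g)) = 𝟙 _) :
    s ≫ F.E.map (F.sqL g) = 𝟙 _ := by
  rwa [hF g]

end FunctorialFactorization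

open FunctorialFactorization in
/-- The coalgebra `(Lg, s)` splits `E(id, Rg) = R(Lg)`, so testing against it with the
square `sqL g` already distinguishes `t` from `t'`. -/
theorem algebra_structure_unique_general {K : Type u} [Category.{v} K]
    (F : FunctorialFactorization K) (hF : F.LeftAccurate)
    (g : Arrow K) (t t' : F.E.obj g ⟶ g.left)
    (s : F.E.obj g ⟶ F.E.obj (Arrow.mk (F.l.app g)))
    (hs : F.IsCoalgebra (Arrow.mk (F.l.app g)) s)
    (coh : ∀ (f : Arrow K) (σ : f.right ⟶ F.E.obj f), F.IsCoalgebra f σ →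
      ∀ φ : f ⟶ g, σ ≫ F.E.map φ ≫ t = σ ≫ F.E.map φ ≫ t') :
    t = t' := by
  have hsplit := hF.comp_map_sqL_eq_id hs.2
  calc t = (s ≫ F.E.map (F.sqL g)) ≫ t := by rw [hsplit, Category.id_comp]
    _ = (s ≫ F.E.map (F.sqL g)) ≫ t' := by
      simpa only [Category.assoc] using coh _ s hs (F.sqL g)
    _ = t' := by rw [hsplit, Category.id_comp]

open FunctorialFactorization in
/-- (Injectivity of `Γ` on algebra structures, Lemma 3.3.)  For a
left accurate functorial factorization, two `R`-algebra structures on the same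
morphism `g` inducing the same lifting function coincide. -/
theorem algebra_structure_unique {K : Type u} [Category.{v} K]
    (F : FunctorialFactorization K) (hF : F.LeftAccurate)
    (g : Arrow K) (t t' : F.E.obj g ⟶ g.left)
    (ht : F.IsAlgebra g t) (ht' : F.IsAlgebra g t')
    (s : F.E.obj g ⟶ F.E.obj (Arrow.mk (F.l.app g)))
    (hs : F.IsCoalgebra (Arrow.mk (F.l.app g)) s)
    (coh : ∀ (f : Arrow K) (σ : f.right ⟶ F.E.obj f), F.IsCoalgebra f σ →
      ∀ φ : f ⟶ g, σ ≫ F.E.map φ ≫ t = σ ≫ F.E.map φ ≫ t') :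
    t = t' :=
  algebra_structure_unique_general F hF g t t' s hs coh
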